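/- arXiv:2602.18116 — 3 statements merged into one kernel-verified Lean document; each statement's English description precedes it below -/
import Mathlib

section
/- Let W ∈ ℝ^{m×p}, let W_p be obtained from W by zeroing a nonempty set of rows (retained rank k_p ≤ m-1), and let W*_f be the folding of W given by an optimal k-means partition of the rows into k_f = k_p + 1 nonempty clusters (each row replaced by its cluster mean, partition minimizing the within-cluster sum of squares). Then ‖W - W_p‖_F² ≥ ‖W - W*_f‖_F². -/
open Finset Matrix

/-- Squared Frobenius norm of a real matrix: sum of squares of all entries. -/
noncomputable def frobSq {m p : ℕ} (A : Matrix (Fin m) (Fin p) ℝ) : ℝ :=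
  ∑ i, ∑ j, (A i j) ^ 2

/-- The cluster of index `i` under the assignment `c`. -/
def cluster {m k : ℕ} (c : Fin m → Fin k) (j : Fin k) : Finset (Fin m) :=
  Finset.univ.filter (fun l => c l = j)

/-- The mean of the rows of `W` lying in cluster `j` of assignment `c`. -/
noncomputable def clusterMean {m k p : ℕ} (c : Fin m → Fin k)
    (W : Matrix (Fin m) (Fin p) ℝ) (j : Fin k) : Fin p → ℝ :=
  fun t => ((cluster c j).card : ℝ)⁻¹ * ∑ l ∈ cluster c j, W l t

/-- The folding of `W` along the partition given by the fibers of `c`: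
each row is replaced by the mean of the rows in its cluster. -/
noncomputable def foldMat {m k p : ℕ} (c : Fin m → Fin k)
    (W : Matrix (Fin m) (Fin p) ℝ) : Matrix (Fin m) (Fin p) ℝ :=
  fun i t => clusterMean c W (c i) t

/-- Within-cluster sum of squares of the partition given by the fibers of `c`. -/
noncomputable def wcss {m k p : ℕ} (c : Fin m → Fin k)
    (W : Matrix (Fin m) (Fin p) ℝ) : ℝ :=
  ∑ j, ∑ i ∈ cluster c j, ∑ t, (W i t - clusterMean c W j t) ^ 2


lemma mean_sq_le {α : Type*} (s : Finset α) (x : α → ℝ) :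
    ∑ i ∈ s, (x i - (s.card : ℝ)⁻¹ * ∑ l ∈ s, x l) ^ 2 ≤ ∑ i ∈ s, x i ^ 2 := by
  rcases s.eq_empty_or_nonempty with h | h
  · simp [h]
  · have hn : (0:ℝ) < s.card := by exact_mod_cast Finset.card_pos.2 h
    have hn0 : (s.card : ℝ) ≠ 0 := ne_of_gt hn
    set n : ℝ := (s.card : ℝ) with hns
    set T : ℝ := ∑ l ∈ s, x l with hT
    have h1 : ∀ i ∈ s, (x i - n⁻¹ * T) ^ 2
        = x i ^ 2 - (2 * n⁻¹ * T) * x i + (n⁻¹ * T) ^ 2 := fun i _ => by ring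
    have key : ∑ i ∈ s, (x i - n⁻¹ * T) ^ 2 = (∑ i ∈ s, x i ^ 2) - T ^ 2 / n := by
      rw [Finset.sum_congr rfl h1, Finset.sum_add_distrib, Finset.sum_sub_distrib,
        ← Finset.mul_sum, Finset.sum_const, nsmul_eq_mul, ← hT, ← hns]
      field_simp
      ring
    have hpos : 0 ≤ T ^ 2 / n := by positivity
    linarith [key]

/-- Pruning a nonempty set of rows (retained rank k_p ≤ m-1) is dominated
by optimal k-means folding with k_f = k_p + 1 nonempty clusters. -/
theorem optimal_folding_dominates_pruning {m p : ℕ} (W : Matrix (Fin m) (Fin p) ℝ)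
    (S : Finset (Fin m)) (hS : S.Nonempty)
    (kp : ℕ) (hkp : kp = m - S.card) (hkpm : kp ≤ m - 1)
    (Wp : Matrix (Fin m) (Fin p) ℝ)
    (hWp : ∀ i j, Wp i j = if i ∈ S then 0 else W i j)
    (c : Fin m → Fin (kp + 1)) (hc : Function.Surjective c)
    (hopt : ∀ c' : Fin m → Fin (kp + 1), Function.Surjective c' → wcss c W ≤ wcss c' W) :
    frobSq (W - Wp) ≥ frobSq (W - foldMat c W) := by
  classical
  have h1 : frobSq (W - Wp) = ∑ i ∈ S, ∑ t, (W i t) ^ 2 := by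
    unfold frobSq
    rw [← Finset.sum_subset (Finset.subset_univ S) (fun i _ hi =>
      Finset.sum_eq_zero fun t _ => by simp [Matrix.sub_apply, hWp, hi])]
    exact Finset.sum_congr rfl fun i hi => Finset.sum_congr rfl fun t _ => by
      simp [Matrix.sub_apply, hWp, hi]
  have h2 : wcss c W = frobSq (W - foldMat c W) := by
    unfold wcss frobSq
    have hcong : ∀ j, ∑ i ∈ cluster c j, ∑ t, (W i t - clusterMean c W j t) ^ 2
        = ∑ i ∈ cluster c j, ∑ t, ((W - foldMat c W) i t) ^ 2 := by
      intro j
      refine Finset.sum_congr rfl fun i hi => ?_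
      have hci : c i = j := (Finset.mem_filter.1 hi).2
      refine Finset.sum_congr rfl fun t _ => ?_
      simp [Matrix.sub_apply, foldMat, hci]
    rw [Finset.sum_congr rfl fun j _ => hcong j]
    unfold cluster
    exact Finset.sum_fiberwise _ _ _
  have hScard : (Sᶜ : Finset (Fin m)).card = kp := by
    rw [Finset.card_compl, hkp]
    simp
  let e : {x // x ∈ (Sᶜ : Finset (Fin m))} ≃ Fin kp :=
    (Sᶜ : Finset (Fin m)).equivFin.trans (finCongr hScard)
  let c' : Fin m → Fin (kp + 1) := fun i =>
    if h : i ∈ (Sᶜ : Finset (Fin m)) then (e ⟨i, h⟩).castSucc else Fin.last kp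
  have hc'S : ∀ i ∈ S, c' i = Fin.last kp := by
    intro i hi
    simp only [c']
    rw [dif_neg (by simp [Finset.mem_compl, hi])]
  have hc'Sc : ∀ i (h : i ∈ (Sᶜ : Finset (Fin m))), c' i = (e ⟨i, h⟩).castSucc := by
    intro i h
    simp only [c']
    rw [dif_pos h]
  have hsurj : Function.Surjective c' := by
    intro j
    induction j using Fin.lastCases with
    | last =>
      obtain ⟨i, hi⟩ := hS
      exact ⟨i, hc'S i hi⟩
    | cast j' =>
      refine ⟨(e.symm j' : Fin m), ?_⟩
      rw [hc'Sc _ (e.symm j').2]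
      congr 1
      simpa using congrArg e (Subtype.ext rfl : (⟨(e.symm j' : Fin m), (e.symm j').2⟩ : {x // x ∈ (Sᶜ : Finset (Fin m))}) = e.symm j')
  have hlastcluster : cluster c' (Fin.last kp) = S := by
    ext l
    simp only [cluster, Finset.mem_filter, Finset.mem_univ, true_and]
    by_cases h : l ∈ (Sᶜ : Finset (Fin m))
    · rw [hc'Sc l h]
      constructor
      · intro heq
        exact absurd heq (Fin.castSucc_lt_last _).ne
      · intro hl
        exact absurd hl (Finset.mem_compl.1 h)
    · rw [Finset.mem_compl, not_not] at h
      simp [hc'S l h, h]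
  have hcastcluster : ∀ j' : Fin kp,
      cluster c' (Fin.castSucc j') = {((e.symm j' : {x // x ∈ (Sᶜ : Finset (Fin m))}) : Fin m)} := by
    intro j'
    ext l
    simp only [cluster, Finset.mem_filter, Finset.mem_univ, true_and, Finset.mem_singleton]
    by_cases h : l ∈ (Sᶜ : Finset (Fin m))
    · rw [hc'Sc l h]
      constructor
      · intro heq
        have h2 : e ⟨l, h⟩ = j' := Fin.castSucc_injective _ heq
        have h3 : (⟨l, h⟩ : {x // x ∈ (Sᶜ : Finset (Fin m))}) = e.symm j' := by
          rw [← h2]; simp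
        exact congrArg Subtype.val h3
      · intro heq
        have h3 : (⟨l, h⟩ : {x // x ∈ (Sᶜ : Finset (Fin m))}) = e.symm j' := Subtype.ext heq
        rw [h3]
        simp
    · rw [Finset.mem_compl, not_not] at h
      rw [hc'S l h]
      constructor
      · intro heq
        exact absurd heq.symm (Fin.castSucc_lt_last _).ne
      · intro heq
        exfalso
        have := (e.symm j').2
        rw [← heq] at this
        exact (Finset.mem_compl.1 this) h
  have hwcss' : wcss c' W ≤ ∑ i ∈ S, ∑ t, (W i t) ^ 2 := by
    unfold wcss
    rw [Fin.sum_univ_castSucc]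
    have hzero : ∀ j' : Fin kp, ∑ i ∈ cluster c' (Fin.castSucc j'),
        ∑ t, (W i t - clusterMean c' W (Fin.castSucc j') t) ^ 2 = 0 := by
      intro j'
      simp [clusterMean, hcastcluster j']
    rw [Finset.sum_eq_zero fun j' _ => hzero j', zero_add]
    have hmean : ∀ t, clusterMean c' W (Fin.last kp) t
        = (S.card : ℝ)⁻¹ * ∑ l ∈ S, W l t := by
      intro t
      simp [clusterMean, hlastcluster]
    calc ∑ i ∈ cluster c' (Fin.last kp), ∑ t, (W i t - clusterMean c' W (Fin.last kp) t) ^ 2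
        = ∑ i ∈ S, ∑ t, (W i t - (S.card : ℝ)⁻¹ * ∑ l ∈ S, W l t) ^ 2 := by
          rw [hlastcluster]
          exact Finset.sum_congr rfl fun i _ => Finset.sum_congr rfl fun t _ => by
            rw [hmean t]
      _ = ∑ t, ∑ i ∈ S, (W i t - (S.card : ℝ)⁻¹ * ∑ l ∈ S, W l t) ^ 2 := Finset.sum_comm
      _ ≤ ∑ t, ∑ i ∈ S, (W i t) ^ 2 :=
          Finset.sum_le_sum fun t _ => mean_sq_le S (fun i => W i t)
      _ = ∑ i ∈ S, ∑ t, (W i t) ^ 2 := Finset.sum_comm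
  calc frobSq (W - foldMat c W) = wcss c W := h2.symm
    _ ≤ wcss c' W := hopt c' hsurj
    _ ≤ ∑ i ∈ S, ∑ t, (W i t) ^ 2 := hwcss'
    _ = frobSq (W - Wp) := h1.symm
end

section
/- Pruning is a special case of folding up to the pruned rows' contribution: if W_p zeroes out a set S of rows of W and W'_f merges S into one cluster (each of those rows replaced by the cluster mean μ, other rows untouched), then ‖W - W_p‖_F² - ‖W - W'_f‖_F² = |S|·‖μ‖₂², where μ = (1/|S|) ∑_{i∈S} w(i). In particular the two errors are equal iff the mean of the pruned rows is zero. -/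
open Finset Matrix

/-- Exact gap between pruning and singleton folding:
‖W - W_p‖_F² - ‖W - W'_f‖_F² = |S|·‖μ‖₂², with equality of the two errors iff μ = 0. -/
theorem pruning_vs_singleton_folding_gap {m p : ℕ} (W : Matrix (Fin m) (Fin p) ℝ)
    (S : Finset (Fin m)) (hS : S.Nonempty)
    (μ : Fin p → ℝ) (hμ : ∀ j, μ j = (S.card : ℝ)⁻¹ * ∑ i ∈ S, W i j)
    (Wp : Matrix (Fin m) (Fin p) ℝ)
    (hWp : ∀ i j, Wp i j = if i ∈ S then 0 else W i j)
    (W' : Matrix (Fin m) (Fin p) ℝ)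
    (hW' : ∀ i j, W' i j = if i ∈ S then μ j else W i j) :
    frobSq (W - Wp) - frobSq (W - W') = (S.card : ℝ) * ∑ j, (μ j) ^ 2 ∧
    (frobSq (W - Wp) = frobSq (W - W') ↔ μ = 0) := by
  have hcard : (S.card : ℝ) ≠ 0 := by
    exact_mod_cast (Finset.card_pos.mpr hS).ne'
  have hsum : ∀ j, ∑ i ∈ S, W i j = (S.card : ℝ) * μ j := by
    intro j
    rw [hμ j]
    field_simp
  have h1 : frobSq (W - Wp) = ∑ i ∈ S, ∑ j, (W i j) ^ 2 := by
    unfold frobSq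
    rw [← Finset.sum_filter_add_sum_filter_not Finset.univ (· ∈ S)]
    have e1 : ∀ i ∈ Finset.univ.filter (· ∈ S), ∑ j, ((W - Wp) i j) ^ 2 = ∑ j, (W i j) ^ 2 := by
      intro i hi
      simp only [Finset.mem_filter] at hi
      apply Finset.sum_congr rfl
      intro j _
      simp [Matrix.sub_apply, hWp, hi.2]
    have e2 : ∀ i ∈ Finset.univ.filter (¬ · ∈ S), ∑ j, ((W - Wp) i j) ^ 2 = 0 := by
      intro i hi
      simp only [Finset.mem_filter] at hi
      apply Finset.sum_eq_zero
      intro j _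
      simp [Matrix.sub_apply, hWp, hi.2]
    rw [Finset.sum_congr rfl e1, Finset.sum_congr rfl e2, Finset.sum_const_zero, add_zero,
      Finset.filter_mem_eq_inter, Finset.univ_inter]
  have h2 : frobSq (W - W') = ∑ i ∈ S, ∑ j, (W i j - μ j) ^ 2 := by
    unfold frobSq
    rw [← Finset.sum_filter_add_sum_filter_not Finset.univ (· ∈ S)]
    have e1 : ∀ i ∈ Finset.univ.filter (· ∈ S), ∑ j, ((W - W') i j) ^ 2 = ∑ j, (W i j - μ j) ^ 2 := by
      intro i hi
      simp only [Finset.mem_filter] at hi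
      apply Finset.sum_congr rfl
      intro j _
      simp [Matrix.sub_apply, hW', hi.2]
    have e2 : ∀ i ∈ Finset.univ.filter (¬ · ∈ S), ∑ j, ((W - W') i j) ^ 2 = 0 := by
      intro i hi
      simp only [Finset.mem_filter] at hi
      apply Finset.sum_eq_zero
      intro j _
      simp [Matrix.sub_apply, hW', hi.2]
    rw [Finset.sum_congr rfl e1, Finset.sum_congr rfl e2, Finset.sum_const_zero, add_zero,
      Finset.filter_mem_eq_inter, Finset.univ_inter]
  have key : frobSq (W - Wp) - frobSq (W - W') = (S.card : ℝ) * ∑ j, (μ j) ^ 2 := by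
    rw [h1, h2, ← Finset.sum_sub_distrib]
    have : ∀ i ∈ S, (∑ j, (W i j) ^ 2) - ∑ j, (W i j - μ j) ^ 2
        = ∑ j, (2 * W i j * μ j - μ j ^ 2) := by
      intro i _
      rw [← Finset.sum_sub_distrib]
      apply Finset.sum_congr rfl
      intro j _
      ring
    rw [Finset.sum_congr rfl this, Finset.sum_comm]
    rw [Finset.mul_sum]
    apply Finset.sum_congr rfl
    intro j _
    rw [Finset.sum_sub_distrib, Finset.sum_const, ← Finset.sum_mul, ← Finset.mul_sum]
    rw [hsum j]
    push_cast [nsmul_eq_mul]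
    ring
  refine ⟨key, ?_⟩
  constructor
  · intro h
    have h0 : (S.card : ℝ) * ∑ j, (μ j) ^ 2 = 0 := by rw [← key]; linarith
    have hsq : ∑ j, (μ j) ^ 2 = 0 := by
      rcases mul_eq_zero.mp h0 with h | h
      · exact absurd h hcard
      · exact h
    funext j
    have := (Finset.sum_eq_zero_iff_of_nonneg (fun j _ => sq_nonneg (μ j))).mp hsq j (Finset.mem_univ j)
    exact pow_eq_zero_iff (by norm_num) |>.mp this
  · intro h
    subst h
    simp at key
    linarith
end

section
/- Let L : ℝ^{m×p} → ℝ be κ-Lipschitz in the Frobenius norm, W ∈ ℝ^{m×p}, and let W_p prune (zero out) a nonempty set S of rows of W while W'_f replaces each row in S by the mean of the rows in S. Then |L(W) - L(W'_f)| ≤ κ·√(‖W - W_p‖_F² − |S|·‖μ‖₂²), where μ is the mean of the rows in S; in particular |L(W) - L(W'_f)| ≤ κ‖W - W_p‖_F. -/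
open Finset Matrix

/-- Frobenius norm of a real matrix. -/
noncomputable def frobNorm {m p : ℕ} (A : Matrix (Fin m) (Fin p) ℝ) : ℝ :=
  Real.sqrt (frobSq A)

/-- For a κ-Lipschitz loss L, the loss perturbation of the singleton folding
W'_f is bounded by κ·√(‖W - W_p‖_F² − |S|·‖μ‖₂²), and in particular by κ‖W - W_p‖_F. -/
theorem lipschitz_loss_folding_bound {m p : ℕ} (L : Matrix (Fin m) (Fin p) ℝ → ℝ)
    (κ : ℝ) (hκ : 0 < κ)
    (hL : ∀ A B : Matrix (Fin m) (Fin p) ℝ, |L A - L B| ≤ κ * frobNorm (A - B))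
    (W : Matrix (Fin m) (Fin p) ℝ)
    (S : Finset (Fin m)) (hS : S.Nonempty)
    (μ : Fin p → ℝ) (hμ : ∀ j, μ j = (S.card : ℝ)⁻¹ * ∑ i ∈ S, W i j)
    (Wp : Matrix (Fin m) (Fin p) ℝ)
    (hWp : ∀ i j, Wp i j = if i ∈ S then 0 else W i j)
    (W' : Matrix (Fin m) (Fin p) ℝ)
    (hW' : ∀ i j, W' i j = if i ∈ S then μ j else W i j) :
    |L W - L W'| ≤ κ * Real.sqrt (frobSq (W - Wp) - (S.card : ℝ) * ∑ j, (μ j) ^ 2) ∧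
    |L W - L W'| ≤ κ * frobNorm (W - Wp) := by

  have hcard : (0:ℝ) < (S.card : ℝ) := by exact_mod_cast hS.card_pos
  have hsum : ∀ j, ∑ i ∈ S, W i j = (S.card : ℝ) * μ j := by
    intro j; rw [hμ j]; field_simp
  have hWp' : frobSq (W - Wp) = ∑ j, ∑ i ∈ S, (W i j) ^ 2 := by
    unfold frobSq
    rw [Finset.sum_comm]
    refine Finset.sum_congr rfl fun j _ => ?_
    rw [← Finset.sum_filter_add_sum_filter_not Finset.univ (· ∈ S)]
    have h1 : ∀ i ∈ Finset.univ.filter (· ∈ S), ((W - Wp) i j) ^ 2 = (W i j) ^ 2 := by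
      intro i hi
      simp only [Finset.mem_filter] at hi
      simp [Matrix.sub_apply, hWp i j, hi.2]
    have h2 : ∀ i ∈ Finset.univ.filter (¬ · ∈ S), ((W - Wp) i j) ^ 2 = 0 := by
      intro i hi
      simp only [Finset.mem_filter] at hi
      simp [Matrix.sub_apply, hWp i j, hi.2]
    rw [Finset.sum_congr rfl h1, Finset.sum_congr rfl h2, Finset.sum_const_zero, add_zero]
    congr 1
    ext i; simp
  have hW'' : frobSq (W - W') = ∑ j, ∑ i ∈ S, (W i j - μ j) ^ 2 := by
    unfold frobSq
    rw [Finset.sum_comm]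
    refine Finset.sum_congr rfl fun j _ => ?_
    rw [← Finset.sum_filter_add_sum_filter_not Finset.univ (· ∈ S)]
    have h1 : ∀ i ∈ Finset.univ.filter (· ∈ S), ((W - W') i j) ^ 2 = (W i j - μ j) ^ 2 := by
      intro i hi
      simp only [Finset.mem_filter] at hi
      simp [Matrix.sub_apply, hW' i j, hi.2]
    have h2 : ∀ i ∈ Finset.univ.filter (¬ · ∈ S), ((W - W') i j) ^ 2 = 0 := by
      intro i hi
      simp only [Finset.mem_filter] at hi
      simp [Matrix.sub_apply, hW' i j, hi.2]
    rw [Finset.sum_congr rfl h1, Finset.sum_congr rfl h2, Finset.sum_const_zero, add_zero]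
    congr 1
    ext i; simp
  have key : frobSq (W - W') = frobSq (W - Wp) - (S.card : ℝ) * ∑ j, (μ j) ^ 2 := by
    rw [hWp', hW'', Finset.mul_sum, ← Finset.sum_sub_distrib]
    refine Finset.sum_congr rfl fun j _ => ?_
    have expand : ∑ i ∈ S, (W i j - μ j) ^ 2
        = (∑ i ∈ S, (W i j) ^ 2) - 2 * μ j * (∑ i ∈ S, W i j) + (S.card : ℝ) * (μ j) ^ 2 := by
      rw [Finset.sum_congr rfl (fun i _ => sub_sq (W i j) (μ j))]
      rw [Finset.sum_add_distrib, Finset.sum_sub_distrib, Finset.sum_const, nsmul_eq_mul]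
      have : ∑ i ∈ S, 2 * W i j * μ j = 2 * μ j * ∑ i ∈ S, W i j := by
        rw [Finset.mul_sum]
        exact Finset.sum_congr rfl fun i _ => by ring
      rw [this]
    rw [expand, hsum j]
    ring
  have hb := hL W W'
  unfold frobNorm at hb ⊢
  rw [key] at hb
  refine ⟨hb, ?_⟩
  refine hb.trans ?_
  gcongr
  have : (0:ℝ) ≤ (S.card : ℝ) * ∑ j, (μ j) ^ 2 := by
    apply mul_nonneg hcard.le
    exact Finset.sum_nonneg fun j _ => sq_nonneg _
  linarith
end
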